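/- Upper bound on the loss via the gap bound: if Q_t^{(π*)}(s, π*(s)) − Q_t^{(π*)}(s, a) ≤ u for all s, a, t, then for any policy π, J(π) − J(π*) = T·ℓ(π) ≤ u·T·g(π), where g(π) = T⁻¹ Σ_{t=0}^{T-1} E_{s∼d_t^{(π)}}[𝟙[π(s) ≠ π*(s)]] is the average 0-1 disagreement with π*. -/
import Mathlib


open Finset

/-- Value function with `n` steps remaining: `V_t^{(π)} = Vval P R π (T - t)`. -/
noncomputable def Vval {S A : Type*} [Fintype S] (P : S → A → S → ℝ) (R : S → ℝ)
    (π : S → A) : ℕ → S → ℝ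
  | 0, _ => 0
  | n + 1, s => R s + ∑ s' : S, P s (π s) s' * Vval P R π n s'

/-- Q-function with `n` steps remaining after the current one:
`Q_t^{(π)}(s,a) = Qval P R π (T - 1 - t) s a`. -/
noncomputable def Qval {S A : Type*} [Fintype S] (P : S → A → S → ℝ) (R : S → ℝ)
    (π : S → A) (n : ℕ) (s : S) (a : A) : ℝ :=
  R s + ∑ s' : S, P s a s' * Vval P R π n s'

/-- Occupancy distribution `d_t^{(π)}` over states at time `t`, starting from `s0`. -/
noncomputable def dOcc {S A : Type*} [Fintype S] [DecidableEq S] (P : S → A → S → ℝ)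
    (π : S → A) (s0 : S) : ℕ → S → ℝ
  | 0, s => if s = s0 then 1 else 0
  | t + 1, s' => ∑ s : S, dOcc P π s0 t s * P s (π s) s'

lemma dOcc_nonneg {S A : Type*} [Fintype S] [DecidableEq S] (P : S → A → S → ℝ)
    (π : S → A) (s0 : S) (hP0 : ∀ s a s', 0 ≤ P s a s') :
    ∀ t s, 0 ≤ dOcc P π s0 t s := by
  intro t
  induction t with
  | zero => intro s; simp [dOcc]; split <;> norm_num
  | succ t ih =>
    intro s'
    exact Finset.sum_nonneg fun s _ => mul_nonneg (ih s) (hP0 _ _ _)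

lemma sum_dOcc_succ_mul {S A : Type*} [Fintype S] [DecidableEq S] (P : S → A → S → ℝ)
    (π : S → A) (s0 : S) (t : ℕ) (f : S → ℝ) :
    ∑ s' : S, dOcc P π s0 (t + 1) s' * f s'
      = ∑ s : S, dOcc P π s0 t s * ∑ s' : S, P s (π s) s' * f s' := by
  simp only [dOcc, Finset.sum_mul, Finset.mul_sum]
  rw [Finset.sum_comm]
  congr 1; ext s; congr 1; ext s'; ring

lemma sum_dOcc_mul_Vval {S A : Type*} [Fintype S] [DecidableEq S] (P : S → A → S → ℝ)
    (R : S → ℝ) (π : S → A) (s0 : S) :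
    ∀ n t, ∑ s : S, dOcc P π s0 t s * Vval P R π n s
      = ∑ k ∈ Finset.range n, ∑ s : S, dOcc P π s0 (t + k) s * R s := by
  intro n
  induction n with
  | zero => intro t; simp [Vval]
  | succ n ih =>
    intro t
    simp only [Vval, mul_add, Finset.sum_add_distrib]
    rw [← sum_dOcc_succ_mul, ih (t + 1), Finset.sum_range_succ']
    simp only [show ∀ k, (t + 1) + k = t + (k + 1) from fun k => by omega, add_zero]
    exact add_comm _ _

/-- if the Q-gap of the oracle is uniformly bounded by `u`, i.e.
`Q_t^{(π*)}(s,π*(s)) − Q_t^{(π*)}(s,a) ≤ u` for all `s, a, t < T`, then for any policy `π`,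
`J(π) − J(π*) = T·ℓ(π) ≤ u·T·g(π)`, where `T·ℓ(π)` is the summed expected loss and
`T·g(π)` the summed expected 0-1 disagreement with `π*`. -/
theorem loss_le_gap_bound_times_zero_one_loss
    {S A : Type*} [Fintype S] [DecidableEq S] [DecidableEq A]
    (P : S → A → S → ℝ) (R : S → ℝ) (s0 : S) (T : ℕ)
    (hP0 : ∀ s a s', 0 ≤ P s a s') (hP1 : ∀ s a, ∑ s' : S, P s a s' = 1)
    (πstar : S → A) (u : ℝ)
    (hgap : ∀ n, n < T → ∀ s a,
      Qval P R πstar n s (πstar s) - Qval P R πstar n s a ≤ u)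
    (π : S → A) :
    (-(Vval P R π T s0)) - (-(Vval P R πstar T s0))
        = (∑ t ∈ range T, ∑ s : S, dOcc P π s0 t s *
            (Vval P R πstar (T - t) s - Qval P R πstar (T - 1 - t) s (π s))) ∧
      (∑ t ∈ range T, ∑ s : S, dOcc P π s0 t s *
            (Vval P R πstar (T - t) s - Qval P R πstar (T - 1 - t) s (π s)))
        ≤ u * ∑ t ∈ range T, ∑ s : S, dOcc P π s0 t s *
            (if π s = πstar s then 0 else 1) := by
  -- telescoping function
  set F : ℕ → ℝ := fun t => ∑ s : S, dOcc P π s0 t s * Vval P R πstar (T - t) s with hF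
  have hF0 : F 0 = Vval P R πstar T s0 := by
    simp [hF, dOcc, Finset.sum_ite_eq]
  have hFT : F T = 0 := by
    simp [hF, Vval]
  have hVπ : Vval P R π T s0 = ∑ t ∈ range T, ∑ s : S, dOcc P π s0 t s * R s := by
    have := sum_dOcc_mul_Vval P R π s0 T 0
    simp only [zero_add] at this
    rw [← this]
    simp [dOcc, Finset.sum_ite_eq]
  have key : ∀ t ∈ range T, F t - F (t + 1)
      = ∑ s : S, dOcc P π s0 t s *
          (Vval P R πstar (T - t) s - Qval P R πstar (T - 1 - t) s (π s))
        + ∑ s : S, dOcc P π s0 t s * R s := by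
    intro t ht
    rw [Finset.mem_range] at ht
    have h1 : T - (t + 1) = T - 1 - t := by omega
    simp only [hF, h1, sum_dOcc_succ_mul P π s0 t (fun s => Vval P R πstar (T - 1 - t) s),
      Qval, mul_sub, mul_add, Finset.sum_sub_distrib, Finset.sum_add_distrib]
    ring
  have htel : Vval P R πstar T s0 - Vval P R π T s0
      = ∑ t ∈ range T, ∑ s : S, dOcc P π s0 t s *
          (Vval P R πstar (T - t) s - Qval P R πstar (T - 1 - t) s (π s)) := by
    have := Finset.sum_range_sub' F T
    rw [Finset.sum_congr rfl key, Finset.sum_add_distrib] at this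
    rw [← hVπ] at *
    rw [hF0, hFT, sub_zero] at this
    linarith [this]
  refine ⟨by linarith [htel], ?_⟩
  rw [Finset.mul_sum]
  refine Finset.sum_le_sum fun t ht => ?_
  rw [Finset.mem_range] at ht
  rw [Finset.mul_sum]
  refine Finset.sum_le_sum fun s _ => ?_
  have hd := dOcc_nonneg P π s0 hP0 t s
  have hV : Vval P R πstar (T - t) s = Qval P R πstar (T - 1 - t) s (πstar s) := by
    have h2 : T - t = (T - 1 - t) + 1 := by omega
    rw [h2]; rfl
  by_cases h : π s = πstar s
  · simp [h, hV, Qval]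
  · simp only [h, if_false, mul_one]
    rw [hV]
    have := hgap (T - 1 - t) (by omega) s (π s)
    calc dOcc P π s0 t s * (Qval P R πstar (T-1-t) s (πstar s) - Qval P R πstar (T-1-t) s (π s))
        ≤ dOcc P π s0 t s * u := by exact mul_le_mul_of_nonneg_left this hd
      _ = u * dOcc P π s0 t s := mul_comm _ _
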